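/- Let |ψ⟩ be a vector in (ℂ²)^{⊗n}, let J be a subset of the n qubits, let S be an invertible tensor product of n invertible 2×2 matrices, and set Z̃_J = S Z_J S⁻¹, where Z_J applies Pauli-Z on qubits in J and identity elsewhere. If the complement of J has odd cardinality, then ⟨ψ*| Y^{⊗n} Z̃_J |ψ⟩ = 0, where ⟨ψ*| is the transpose of |ψ⟩ in the computational basis. -/

import Mathlib

open Matrix BigOperators

noncomputable section

/-- Pauli X matrix. -/
def PX : Matrix (Fin 2) (Fin 2) ℂ := !![0, 1; 1, 0]
/-- Pauli Y matrix. -/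
def PY : Matrix (Fin 2) (Fin 2) ℂ := !![0, -Complex.I; Complex.I, 0]
/-- Pauli Z matrix. -/
def PZ : Matrix (Fin 2) (Fin 2) ℂ := !![1, 0; 0, -1]

/-- Tensor (Kronecker) product of `n` single-qubit operators, as a matrix on `(ℂ²)^{⊗n}`
indexed by bit strings. -/
def kprod {n : ℕ} (A : Fin n → Matrix (Fin 2) (Fin 2) ℂ) :
    Matrix (Fin n → Fin 2) (Fin n → Fin 2) ℂ :=
  Matrix.of fun x y => ∏ i, A i (x i) (y i)

/-- `Y^{⊗n}`. -/
def Yn (n : ℕ) : Matrix (Fin n → Fin 2) (Fin n → Fin 2) ℂ := kprod fun _ => PY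

/-- `Z_{j(1)}`: Pauli `Z` on the qubits where the bit string `j` equals 1. -/
def Zbits {n : ℕ} (j : Fin n → Fin 2) : Matrix (Fin n → Fin 2) (Fin n → Fin 2) ℂ :=
  kprod fun i => if j i = 1 then PZ else 1

/-- `Z_J`: Pauli `Z` on the qubits in the set `J`, identity elsewhere. -/
def ZJ {n : ℕ} (J : Finset (Fin n)) : Matrix (Fin n → Fin 2) (Fin n → Fin 2) ℂ :=
  kprod fun i => if i ∈ J then PZ else 1

/-- The graph-state stabilizer generator `σᵢ = Xᵢ Z_{N(i)}`. -/
def graphGen {n : ℕ} (G : SimpleGraph (Fin n)) [DecidableRel G.Adj] (i : Fin n) :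
    Matrix (Fin n → Fin 2) (Fin n → Fin 2) ℂ :=
  kprod fun k => if k = i then PX else if G.Adj i k then PZ else 1

/-- The stabilizer group `Σ(G)` of the graph state, generated by the `σᵢ`
(as a multiplicative closure; the generators are involutions so this is the group). -/
def stabGroup {n : ℕ} (G : SimpleGraph (Fin n)) [DecidableRel G.Adj] :
    Submonoid (Matrix (Fin n → Fin 2) (Fin n → Fin 2) ℂ) :=
  Submonoid.closure (Set.range (graphGen G))

/-- `g` is the graph state of `G`: the (unique up to phase) common `+1` unit eigenvector
of all stabilizer generators. -/
def IsGraphState {n : ℕ} (G : SimpleGraph (Fin n)) [DecidableRel G.Adj]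
    (g : (Fin n → Fin 2) → ℂ) : Prop :=
  star g ⬝ᵥ g = 1 ∧ ∀ i, graphGen G i *ᵥ g = g

/-! Substituting `ψ = S φ`, the bilinear form `(u, v) ↦ uᵀ v` turns `Y^{⊗n} Z̃_J` into
`Y^{⊗n} Z_J` up to the factor `∏ det Sᵢ`, because `Aᵀ Y A = (det A) Y` for every `2 × 2` matrix
`A`. Per qubit, `Y Z` is symmetric while `Y` is antisymmetric, so
`(Y^{⊗n} Z_J)ᵀ = (-1)^{|Jᶜ|} Y^{⊗n} Z_J`; for `|Jᶜ|` odd this matrix is antisymmetric and its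
quadratic form vanishes. -/

theorem Matrix.dotProduct_mulVec_self_eq_zero_of_transpose_eq_neg {m R : Type*} [Fintype m]
    [CommRing R] [IsAddTorsionFree R] {M : Matrix m m R} (hM : Mᵀ = -M) (v : m → R) :
    v ⬝ᵥ (M *ᵥ v) = 0 := by
  refine self_eq_neg.mp ?_
  calc v ⬝ᵥ (M *ᵥ v) = (Mᵀ *ᵥ v) ⬝ᵥ v := by rw [dotProduct_mulVec, mulVec_transpose]
    _ = -(v ⬝ᵥ (M *ᵥ v)) := by rw [hM, neg_mulVec, neg_dotProduct, dotProduct_comm]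

theorem Matrix.mulVec_dotProduct_mulVec {m n R : Type*} [Fintype m] [Fintype n] [CommSemiring R]
    (A B : Matrix m n R) (u v : n → R) :
    (A *ᵥ u) ⬝ᵥ (B *ᵥ v) = u ⬝ᵥ ((Aᵀ * B) *ᵥ v) := by
  rw [← mulVec_mulVec, dotProduct_mulVec u, vecMul_transpose]

theorem transpose_mul_PY_mul (A : Matrix (Fin 2) (Fin 2) ℂ) :
    Aᵀ * PY * A = A.det • PY := by
  rw [det_fin_two]
  ext i j; fin_cases i <;> fin_cases j <;>
    simp [mul_apply, Fin.sum_univ_two, PY] <;> ring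

theorem PY_transpose : PYᵀ = -PY := by
  ext i j; fin_cases i <;> fin_cases j <;> simp [PY]

theorem PY_mul_PZ_transpose : (PY * PZ)ᵀ = PY * PZ := by
  ext i j; fin_cases i <;> fin_cases j <;> simp [mul_apply, Fin.sum_univ_two, PY, PZ]

section kprod

variable {n : ℕ}

theorem kprod_mul (A B : Fin n → Matrix (Fin 2) (Fin 2) ℂ) :
    kprod A * kprod B = kprod (fun i => A i * B i) := by
  ext x y
  simp only [kprod, mul_apply, of_apply, Finset.prod_univ_sum, Finset.prod_mul_distrib]
  exact (Fintype.sum_equiv (Equiv.piCongrRight fun _ => Equiv.refl _) _ _ fun _ => rfl).symm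

theorem kprod_transpose (A : Fin n → Matrix (Fin 2) (Fin 2) ℂ) :
    (kprod A)ᵀ = kprod (fun i => (A i)ᵀ) := by
  ext x y; simp [kprod]

theorem kprod_smul (c : Fin n → ℂ) (A : Fin n → Matrix (Fin 2) (Fin 2) ℂ) :
    kprod (fun i => c i • A i) = (∏ i, c i) • kprod A := by
  ext x y; simp [kprod, Finset.prod_mul_distrib]

theorem transpose_kprod_mul_Yn_mul_kprod (A : Fin n → Matrix (Fin 2) (Fin 2) ℂ) :
    (kprod A)ᵀ * Yn n * kprod A = (∏ i, (A i).det) • Yn n := by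
  simp only [Yn, kprod_transpose, kprod_mul, transpose_mul_PY_mul, kprod_smul]

theorem Yn_mul_ZJ_transpose (J : Finset (Fin n)) :
    (Yn n * ZJ J)ᵀ = (-1 : ℂ) ^ Jᶜ.card • (Yn n * ZJ J) := by
  have hfactor : ∀ i, (PY * if i ∈ J then PZ else 1)ᵀ
      = (if i ∈ Jᶜ then -1 else 1 : ℂ) • (PY * if i ∈ J then PZ else 1) := by
    intro i
    by_cases hi : i ∈ J <;> simp [hi, -transpose_mul, PY_mul_PZ_transpose, PY_transpose]
  rw [Yn, ZJ, kprod_mul, kprod_transpose, funext hfactor, kprod_smul, Fintype.prod_ite_mem,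
    Finset.prod_const]

end kprod

theorem stmt3_general {n : ℕ} (ψ : (Fin n → Fin 2) → ℂ) (J : Finset (Fin n))
    (S : Fin n → Matrix (Fin 2) (Fin 2) ℂ)
    (hodd : Odd Jᶜ.card) :
    ψ ⬝ᵥ ((Yn n * (kprod S * ZJ J * (kprod S)⁻¹)) *ᵥ ψ) = 0 := by
  by_cases hS : IsUnit (kprod S).det
  · set φ := (kprod S)⁻¹ *ᵥ ψ
    have hψ : ψ = kprod S *ᵥ φ := by rw [mulVec_mulVec, mul_nonsing_inv _ hS, one_mulVec]
    have hanti : (Yn n * ZJ J)ᵀ = -(Yn n * ZJ J) := by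
      rw [Yn_mul_ZJ_transpose, hodd.neg_one_pow, neg_one_smul]
    calc ψ ⬝ᵥ ((Yn n * (kprod S * ZJ J * (kprod S)⁻¹)) *ᵥ ψ)
        = (kprod S *ᵥ φ) ⬝ᵥ ((Yn n * kprod S * ZJ J) *ᵥ φ) := by
          rw [← hψ]; simp only [φ, mulVec_mulVec, mul_assoc]
      _ = φ ⬝ᵥ (((kprod S)ᵀ * Yn n * kprod S * ZJ J) *ᵥ φ) := by
          rw [mulVec_dotProduct_mulVec]; simp only [mul_assoc]
      _ = (∏ i, (S i).det) * (φ ⬝ᵥ ((Yn n * ZJ J) *ᵥ φ)) := by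
          rw [transpose_kprod_mul_Yn_mul_kprod, smul_mul, smul_mulVec, dotProduct_smul,
            smul_eq_mul]
      _ = 0 := by
          rw [dotProduct_mulVec_self_eq_zero_of_transpose_eq_neg hanti, mul_zero]
  · simp [nonsing_inv_apply_not_isUnit _ hS]

/-- parity lemma: if `|V∖J|` is odd then `⟨ψ*| Y^{⊗n} Z̃_J |ψ⟩ = 0`,
where `Z̃_J = S Z_J S⁻¹`. -/
theorem stmt3 {n : ℕ} (ψ : (Fin n → Fin 2) → ℂ) (J : Finset (Fin n))
    (S : Fin n → Matrix (Fin 2) (Fin 2) ℂ) (hS : ∀ i, IsUnit (S i).det)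
    (hodd : Odd Jᶜ.card) :
    ψ ⬝ᵥ ((Yn n * (kprod S * ZJ J * (kprod S)⁻¹)) *ᵥ ψ) = 0 :=
  stmt3_general ψ J S hodd
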